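/- Let (Y, M, μ) be a finite measure space, (e_n)_{n≥1} an orthonormal basis of L²(Y,μ), (g_n) independent N_ℂ(0,1) Gaussians, and c ∈ ℓ²(ℕ*). Fix p ∈ [2,∞). If ∑_{n≥1} |c_n|² ‖e_n‖_{L^p(Y,μ)}² < ∞, then the random series F_c = ∑_n g_n c_n e_n satisfies ‖F_c(ω)‖_{L^p(Y,μ)} < ∞ almost surely. -/

import Mathlib

open MeasureTheory ProbabilityTheory Filter
open scoped ENNReal NNReal

noncomputable section

/-- `Z` is an `N_ℂ(0, σ2)` Gaussian random variable with respect to the probability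
measure `P` : it writes `Z = X + iY` with `X, Y` independent real centered Gaussian
variables, each of variance `σ2`. -/
def IsGaussianC {Ω : Type*} [MeasurableSpace Ω] (P : Measure Ω) (Z : Ω → ℂ)
    (σ2 : ℝ≥0) : Prop :=
  ∃ X Y : Ω → ℝ, (∀ ω, Z ω = X ω + Y ω * Complex.I) ∧ IndepFun X Y P ∧
    Measurable X ∧ Measurable Y ∧
    P.map X = gaussianReal 0 σ2 ∧ P.map Y = gaussianReal 0 σ2

/-- `(e n)` is an orthonormal system in `L²(Y, μ)`. -/
def IsOrthonormalSystem {Y : Type*} [MeasurableSpace Y] (μ : Measure Y)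
    (e : ℕ → Y → ℂ) : Prop :=
  (∀ n, Measurable (e n)) ∧ (∀ n, MemLp (e n) 2 μ) ∧
    ∀ m n, ∫ y, (starRingEnd ℂ) (e m y) * e n y ∂μ = if m = n then 1 else 0

/-- completeness of the system `(e n)` in `L²(Y, μ)` : any `L²` function orthogonal
to all the `e n` vanishes almost everywhere. -/
def IsCompleteSystem {Y : Type*} [MeasurableSpace Y] (μ : Measure Y)
    (e : ℕ → Y → ℂ) : Prop :=
  ∀ f : Y → ℂ, MemLp f 2 μ →
    (∀ n, ∫ y, (starRingEnd ℂ) (e n y) * f y ∂μ = 0) → f =ᵐ[μ] 0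

/-- `(g n)` is a sequence of independent `N_ℂ(0,1)` Gaussian random variables. -/
def IsStdGaussianSeq {Ω : Type*} [MeasurableSpace Ω] (P : Measure Ω)
    (g : ℕ → Ω → ℂ) : Prop :=
  (∀ n, Measurable (g n)) ∧ iIndepFun g P ∧
    ∀ n, IsGaussianC P (g n) 1

/-- `F` is the random series `∑ n, g n • c n • e n`, i.e. the limit in `L²(Ω × Y)`
of the partial sums `∑_{n < N} g n • c n • e n`. -/
def IsL2LimitOfSeries {Ω Y : Type*} [MeasurableSpace Ω] [MeasurableSpace Y]
    (P : Measure Ω) (μ : Measure Y) (g : ℕ → Ω → ℂ) (c : ℕ → ℂ) (e : ℕ → Y → ℂ)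
    (F : Ω → Y → ℂ) : Prop :=
  Measurable (Function.uncurry F) ∧
    Tendsto (fun N => eLpNorm
      (fun q : Ω × Y => F q.1 q.2 - ∑ n ∈ Finset.range N, g n q.1 * c n * e n q.2)
      2 (P.prod μ)) atTop (nhds 0)

/-!
For fixed `y`, the real and imaginary parts of `∑ n, g n * (c n * e n y)` are centred real
Gaussians of variance `σ² = ∑ n, |c n * e n y|²`, so the `p`-th absolute moment of the sum is at
most `2 ^ p * m_p * σ ^ p`, where `m_p` is the `p`-th absolute moment of `N(0, 1)`. Integrating
in `y` and applying Minkowski's inequality in `L^{p/2}` to `σ²` bounds `E ‖S_N‖_{L^p}^p`, for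
the partial sums `S_N`, by `2 ^ p * m_p * (∑ n, |c n|² ‖e n‖_{L^p}²) ^ (p / 2)`, uniformly in `N`.
These converge to `F` in `L²(P × μ)`, hence almost everywhere along a subsequence, and Fatou's lemma
gives `E ‖F‖_{L^p}^p < ∞`.
-/

section GaussianMoments

variable {Ω : Type*} [MeasurableSpace Ω] {P : Measure Ω}

lemma IsGaussianC.map_re_mul_eq_gaussianReal {Z : Ω → ℂ} {σ2 : ℝ≥0} (hZ : IsGaussianC P Z σ2)
    (a : ℂ) :
    P.map (fun ω => (Z ω * a).re) = gaussianReal 0 (‖a‖₊ ^ 2 * σ2) := by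
  obtain ⟨X, Y, hZXY, hind, hX, hY, hXlaw, hYlaw⟩ := hZ
  have hre : (fun ω => (Z ω * a).re) = (fun ω => a.re * X ω) + (fun ω => -a.im * Y ω) := by
    ext ω
    simp [hZXY, Complex.mul_re]
    ring
  have hind' : IndepFun (fun ω => a.re * X ω) (fun ω => -a.im * Y ω) P :=
    hind.comp (measurable_const_mul _) (measurable_const_mul _)
  rw [hre, gaussianReal_add_gaussianReal_of_indepFun hind'
    (gaussianReal_const_mul ⟨hX.aemeasurable, hXlaw⟩ a.re).map_eq
    (gaussianReal_const_mul ⟨hY.aemeasurable, hYlaw⟩ (-a.im)).map_eq, ← add_mul]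
  congr 1
  · simp
  · ext
    push_cast
    rw [Complex.sq_norm, Complex.normSq_apply]
    ring

lemma iIndepFun.map_sum_eq_gaussianReal [IsProbabilityMeasure P] {ι : Type*}
    {X : ι → Ω → ℝ} {m : ι → ℝ} {v : ι → ℝ≥0} (hind : iIndepFun X P)
    (hX : ∀ i, Measurable (X i)) (hlaw : ∀ i, P.map (X i) = gaussianReal (m i) (v i))
    (s : Finset ι) :
    P.map (∑ i ∈ s, X i) = gaussianReal (∑ i ∈ s, m i) (∑ i ∈ s, v i) := by
  classical
  induction s using Finset.induction_on with
  | empty => simp [gaussianReal_zero_var, Pi.zero_def, Measure.map_const]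
  | insert i s hi ih =>
    rw [Finset.sum_insert hi, Finset.sum_insert hi, Finset.sum_insert hi, add_comm (X i),
      add_comm (m i), add_comm (v i)]
    exact gaussianReal_add_gaussianReal_of_indepFun
      (hind.indepFun_finsetSum_of_notMem hX hi) ih (hlaw i)

lemma lintegral_enorm_rpow_of_map_eq_gaussianReal {X : Ω → ℝ} {v : ℝ≥0} (hX : Measurable X)
    (hlaw : P.map X = gaussianReal 0 v) {p : ℝ} (hp : 0 ≤ p) :
    ∫⁻ ω, ‖X ω‖ₑ ^ p ∂P = (v : ℝ≥0∞) ^ (p / 2) * ∫⁻ x, ‖x‖ₑ ^ p ∂gaussianReal 0 1 := by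
  have hscale : gaussianReal 0 v = (gaussianReal 0 1).map (fun x => (NNReal.sqrt v : ℝ) * x) := by
    rw [gaussianReal_map_const_mul, mul_zero, mul_one]
    congr
    ext
    simp
  rw [← lintegral_map (f := fun x : ℝ => ‖x‖ₑ ^ p) (by fun_prop) hX, hlaw, hscale,
    lintegral_map (by fun_prop) (by fun_prop)]
  simp_rw [enorm_mul, ENNReal.mul_rpow_of_nonneg _ _ hp]
  rw [lintegral_const_mul _ (by fun_prop)]
  congr 1
  rw [Real.enorm_of_nonneg (by positivity), NNReal.sqrt_eq_rpow, ENNReal.ofReal_coe_nnreal,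
    ENNReal.coe_rpow_of_nonneg _ (by norm_num), ← ENNReal.rpow_mul]
  ring_nf

lemma lintegral_enorm_rpow_gaussianReal_lt_top {p : ℝ} (hp : 0 < p) :
    ∫⁻ x, ‖x‖ₑ ^ p ∂gaussianReal 0 1 < ∞ := by
  simpa [hp.le] using lintegral_rpow_enorm_lt_top_of_eLpNorm_lt_top
    (ENNReal.ofReal_pos.mpr hp).ne' ENNReal.ofReal_ne_top
    (memLp_id_gaussianReal' (μ := 0) (v := 1) _ ENNReal.ofReal_ne_top).eLpNorm_lt_top

lemma IsStdGaussianSeq.map_sum_re_mul_eq_gaussianReal [IsProbabilityMeasure P] {g : ℕ → Ω → ℂ}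
    (hg : IsStdGaussianSeq P g) (a : ℕ → ℂ) (s : Finset ℕ) :
    P.map (fun ω => ∑ n ∈ s, (g n ω * a n).re) = gaussianReal 0 (∑ n ∈ s, ‖a n‖₊ ^ 2) := by
  have hmeas : ∀ n, Measurable fun ω => (g n ω * a n).re := fun n => by
    have := hg.1 n
    fun_prop
  simpa [Finset.sum_fn] using iIndepFun.map_sum_eq_gaussianReal
    (hg.2.1.comp (fun n z => (z * a n).re) fun n => by fun_prop) hmeas
    (fun n => (hg.2.2 n).map_re_mul_eq_gaussianReal (a n)) s

lemma IsStdGaussianSeq.lintegral_enorm_sum_mul_rpow_le [IsProbabilityMeasure P] {g : ℕ → Ω → ℂ}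
    (hg : IsStdGaussianSeq P g) (a : ℕ → ℂ) (s : Finset ℕ) {p : ℝ} (hp : 1 ≤ p) :
    ∫⁻ ω, ‖∑ n ∈ s, g n ω * a n‖ₑ ^ p ∂P ≤
      2 ^ p * (∫⁻ x, ‖x‖ₑ ^ p ∂gaussianReal 0 1) *
        ENNReal.ofReal (∑ n ∈ s, ‖a n‖ ^ 2) ^ (p / 2) := by
  have hmeas : ∀ b : ℕ → ℂ, Measurable fun ω => ∑ n ∈ s, (g n ω * b n).re := fun b => by
    have := hg.1
    fun_prop
  have hpart : ∀ b : ℕ → ℂ, (∀ n, ‖b n‖ = ‖a n‖) →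
      ∫⁻ ω, ‖∑ n ∈ s, (g n ω * b n).re‖ₑ ^ p ∂P =
        ENNReal.ofReal (∑ n ∈ s, ‖a n‖ ^ 2) ^ (p / 2) * ∫⁻ x, ‖x‖ₑ ^ p ∂gaussianReal 0 1 := by
    intro b hb
    rw [lintegral_enorm_rpow_of_map_eq_gaussianReal (hmeas b)
      (hg.map_sum_re_mul_eq_gaussianReal b s) (by linarith), ← ENNReal.ofReal_coe_nnreal]
    push_cast
    simp [hb]
  have hpoint : ∀ ω, ‖∑ n ∈ s, g n ω * a n‖ₑ ^ p ≤ 2 ^ (p - 1) *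
      (‖∑ n ∈ s, (g n ω * a n).re‖ₑ ^ p + ‖∑ n ∈ s, (g n ω * (-Complex.I * a n)).re‖ₑ ^ p) := by
    intro ω
    set z := ∑ n ∈ s, g n ω * a n
    have hre : ∑ n ∈ s, (g n ω * a n).re = z.re := (Complex.re_sum _ _).symm
    have him : ∑ n ∈ s, (g n ω * (-Complex.I * a n)).re = z.im := by
      rw [Complex.im_sum]
      refine Finset.sum_congr rfl fun n _ => ?_
      simp [Complex.mul_re, Complex.mul_im]
      ring
    have hz : ‖z‖ₑ ≤ ‖z.re‖ₑ + ‖z.im‖ₑ := by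
      simp only [← ofReal_norm, Real.norm_eq_abs,
        ← ENNReal.ofReal_add (abs_nonneg _) (abs_nonneg _)]
      exact ENNReal.ofReal_le_ofReal (Complex.norm_le_abs_re_add_abs_im z)
    rw [hre, him]
    exact (ENNReal.rpow_le_rpow hz (by linarith)).trans
      (ENNReal.rpow_add_le_mul_rpow_add_rpow _ _ hp)
  have htwo : (2 : ℝ≥0∞) ^ (p - 1) * 2 = 2 ^ p := by
    conv_rhs => rw [show p = (p - 1) + 1 by ring,
      ENNReal.rpow_add _ _ two_ne_zero ENNReal.ofNat_ne_top, ENNReal.rpow_one]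
  calc ∫⁻ ω, ‖∑ n ∈ s, g n ω * a n‖ₑ ^ p ∂P
      ≤ ∫⁻ ω, 2 ^ (p - 1) * (‖∑ n ∈ s, (g n ω * a n).re‖ₑ ^ p +
          ‖∑ n ∈ s, (g n ω * (-Complex.I * a n)).re‖ₑ ^ p) ∂P := lintegral_mono hpoint
    _ = 2 ^ (p - 1) * (∫⁻ ω, ‖∑ n ∈ s, (g n ω * a n).re‖ₑ ^ p ∂P +
          ∫⁻ ω, ‖∑ n ∈ s, (g n ω * (-Complex.I * a n)).re‖ₑ ^ p ∂P) := by
      rw [lintegral_const_mul _ (by fun_prop), lintegral_add_left (by fun_prop)]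
    _ = 2 ^ p * (∫⁻ x, ‖x‖ₑ ^ p ∂gaussianReal 0 1) *
          ENNReal.ofReal (∑ n ∈ s, ‖a n‖ ^ 2) ^ (p / 2) := by
      rw [hpart a fun _ => rfl, hpart _ fun n => by simp, ← two_mul, ← mul_assoc, htwo]
      ring

end GaussianMoments

lemma eLpNorm_sum_sq_norm_le {Y E ι : Type*} [MeasurableSpace Y] {μ : Measure Y}
    [NormedAddCommGroup E] (s : Finset ι) {f : ι → Y → E}
    (hf : ∀ i, AEStronglyMeasurable (f i) μ) {p : ℝ} (hp : 2 ≤ p) :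
    eLpNorm (fun y => ∑ i ∈ s, ‖f i y‖ ^ 2) (ENNReal.ofReal (p / 2)) μ ≤
      ∑ i ∈ s, eLpNorm (f i) (ENNReal.ofReal p) μ ^ 2 := by
  have hsq : ∀ i, eLpNorm (fun y => ‖f i y‖ ^ 2) (ENNReal.ofReal (p / 2)) μ =
      eLpNorm (f i) (ENNReal.ofReal p) μ ^ 2 := fun i => by
    have := eLpNorm_norm_rpow (f i) (p := ENNReal.ofReal (p / 2)) (μ := μ) two_pos
    rw [← ENNReal.ofReal_mul (by linarith), div_mul_cancel₀ _ two_ne_zero] at this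
    simpa using this
  rw [← Finset.sum_fn]
  calc eLpNorm (∑ i ∈ s, fun y => ‖f i y‖ ^ 2) (ENNReal.ofReal (p / 2)) μ
      ≤ ∑ i ∈ s, eLpNorm (fun y => ‖f i y‖ ^ 2) (ENNReal.ofReal (p / 2)) μ :=
        eLpNorm_sum_le (fun i _ => ((hf i).norm.pow 2)) (ENNReal.one_le_ofReal.mpr (by linarith))
    _ = ∑ i ∈ s, eLpNorm (f i) (ENNReal.ofReal p) μ ^ 2 := Finset.sum_congr rfl fun i _ => hsq i

lemma IsStdGaussianSeq.lintegral_prod_enorm_sum_mul_rpow_le {Ω Y : Type*} [MeasurableSpace Ω]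
    [MeasurableSpace Y] {P : Measure Ω} {μ : Measure Y} [IsProbabilityMeasure P] [SFinite μ]
    {g : ℕ → Ω → ℂ} (hg : IsStdGaussianSeq P g) {f : ℕ → Y → ℂ} (hf : ∀ n, Measurable (f n))
    (s : Finset ℕ) {p : ℝ} (hp : 2 ≤ p) :
    ∫⁻ q, ‖∑ n ∈ s, g n q.1 * f n q.2‖ₑ ^ p ∂(P.prod μ) ≤
      2 ^ p * (∫⁻ x, ‖x‖ₑ ^ p ∂gaussianReal 0 1) *
        (∑ n ∈ s, eLpNorm (f n) (ENNReal.ofReal p) μ ^ 2) ^ (p / 2) := by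
  have hmeas : Measurable fun q : Ω × Y => ‖∑ n ∈ s, g n q.1 * f n q.2‖ₑ ^ p := by
    have := hg.1
    fun_prop
  have hp2 : 0 < p / 2 := by linarith
  rw [lintegral_prod_symm _ hmeas.aemeasurable]
  calc ∫⁻ y, ∫⁻ ω, ‖∑ n ∈ s, g n ω * f n y‖ₑ ^ p ∂P ∂μ
      ≤ ∫⁻ y, 2 ^ p * (∫⁻ x, ‖x‖ₑ ^ p ∂gaussianReal 0 1) *
          ENNReal.ofReal (∑ n ∈ s, ‖f n y‖ ^ 2) ^ (p / 2) ∂μ :=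
        lintegral_mono fun y => hg.lintegral_enorm_sum_mul_rpow_le (f · y) s (by linarith)
    _ = 2 ^ p * (∫⁻ x, ‖x‖ₑ ^ p ∂gaussianReal 0 1) *
          eLpNorm (fun y => ∑ n ∈ s, ‖f n y‖ ^ 2) (ENNReal.ofReal (p / 2)) μ ^ (p / 2) := by
      rw [lintegral_const_mul _ (by fun_prop), eLpNorm_eq_eLpNorm' (by simpa using hp2)
        ENNReal.ofReal_ne_top, ENNReal.toReal_ofReal hp2.le,
        ← lintegral_rpow_enorm_eq_rpow_eLpNorm' hp2]
      simp_rw [Real.enorm_of_nonneg (by positivity : (0 : ℝ) ≤ ∑ n ∈ s, ‖f n _‖ ^ 2)]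
    _ ≤ _ := by
      gcongr
      exact eLpNorm_sum_sq_norm_le s (fun n => (hf n).aestronglyMeasurable) hp

lemma lintegral_enorm_rpow_le_of_tendsto_eLpNorm {α E : Type*} [MeasurableSpace α]
    {μ : Measure α} [NormedAddCommGroup E] {f : ℕ → α → E} {F : α → E}
    (hf : ∀ n, AEStronglyMeasurable (f n) μ) (hF : AEStronglyMeasurable F μ) {q : ℝ≥0∞}
    (hq : q ≠ 0) (hlim : Tendsto (fun n => eLpNorm (F - f n) q μ) atTop (nhds 0))
    {p : ℝ} {C : ℝ≥0∞} (hbdd : ∀ n, ∫⁻ x, ‖f n x‖ₑ ^ p ∂μ ≤ C) :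
    ∫⁻ x, ‖F x‖ₑ ^ p ∂μ ≤ C := by
  have hmeas : TendstoInMeasure μ f atTop F :=
    tendstoInMeasure_of_tendsto_eLpNorm hq hf hF (by simpa only [eLpNorm_sub_comm] using hlim)
  obtain ⟨ns, -, hae⟩ := hmeas.exists_seq_tendsto_ae
  calc ∫⁻ x, ‖F x‖ₑ ^ p ∂μ
      = ∫⁻ x, liminf (fun k => ‖f (ns k) x‖ₑ ^ p) atTop ∂μ :=
        lintegral_congr_ae <| hae.mono fun x hx =>
          ((ENNReal.continuous_rpow_const.tendsto _).comp
            ((continuous_enorm.tendsto _).comp hx)).liminf_eq.symm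
    _ ≤ liminf (fun k => ∫⁻ x, ‖f (ns k) x‖ₑ ^ p ∂μ) atTop :=
        lintegral_liminf_le' fun k => (hf (ns k)).enorm.pow_const p
    _ ≤ C := liminf_le_of_frequently_le' (Frequently.of_forall fun k => hbdd (ns k))

lemma ae_eLpNorm_lt_top_of_lintegral_uncurry_lt_top {Ω Y E : Type*} [MeasurableSpace Ω]
    [MeasurableSpace Y] {P : Measure Ω} {μ : Measure Y} [SFinite μ] [NormedAddCommGroup E]
    {F : Ω → Y → E} (hF : AEStronglyMeasurable (Function.uncurry F) (P.prod μ))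
    {p : ℝ} (hp : 0 < p)
    (h : ∫⁻ q, ‖Function.uncurry F q‖ₑ ^ p ∂(P.prod μ) < ∞) :
    ∀ᵐ ω ∂P, eLpNorm (F ω) (ENNReal.ofReal p) μ < ∞ := by
  have hint : AEMeasurable (fun q => ‖Function.uncurry F q‖ₑ ^ p) (P.prod μ) :=
    hF.enorm.pow_const p
  rw [lintegral_prod _ hint] at h
  filter_upwards [ae_lt_top' hint.lintegral_prod_right' h.ne] with ω hω
  rw [eLpNorm_lt_top_iff_lintegral_rpow_enorm_lt_top (by simpa using hp) ENNReal.ofReal_ne_top,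
    ENNReal.toReal_ofReal hp.le]
  exact hω

theorem lp_norm_finite_of_summable_general {Ω Y : Type*} [MeasurableSpace Ω] [MeasurableSpace Y]
    (P : Measure Ω) (μ : Measure Y) [IsProbabilityMeasure P] [IsFiniteMeasure μ]
    (e : ℕ → Y → ℂ) (c : ℕ → ℂ) (g : ℕ → Ω → ℂ) (F : Ω → Y → ℂ)
    (he : IsOrthonormalSystem μ e)
    (hg : IsStdGaussianSeq P g) (hF : IsL2LimitOfSeries P μ g c e F)
    (p : ℝ) (hp : 2 ≤ p)
    (hsum : ∑' n, ENNReal.ofReal (‖c n‖ ^ 2) *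
        eLpNorm (e n) (ENNReal.ofReal p) μ ^ 2 < ⊤) :
    ∀ᵐ ω ∂P, eLpNorm (F ω) (ENNReal.ofReal p) μ < ⊤ := by
  set C := 2 ^ p * (∫⁻ x, ‖x‖ₑ ^ p ∂gaussianReal 0 1) *
    (∑' n, ENNReal.ofReal (‖c n‖ ^ 2) * eLpNorm (e n) (ENNReal.ofReal p) μ ^ 2) ^ (p / 2)
    with hC
  set S : ℕ → Ω × Y → ℂ := fun N q => ∑ n ∈ Finset.range N, g n q.1 * c n * e n q.2
  have hS : ∀ N, Measurable (S N) := fun N => by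
    have := hg.1
    have := he.1
    fun_prop
  have hce : ∀ n, eLpNorm (fun y => c n * e n y) (ENNReal.ofReal p) μ ^ 2 =
      ENNReal.ofReal (‖c n‖ ^ 2) * eLpNorm (e n) (ENNReal.ofReal p) μ ^ 2 := fun n => by
    rw [show (fun y => c n * e n y) = c n • e n from rfl, eLpNorm_const_smul, mul_pow,
      ← ofReal_norm, ← ENNReal.ofReal_pow (norm_nonneg _)]
  have hbound : ∀ N, ∫⁻ q, ‖S N q‖ₑ ^ p ∂(P.prod μ) ≤ C := fun N => by
    simp_rw [S, mul_assoc (g _ _)]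
    refine (hg.lintegral_prod_enorm_sum_mul_rpow_le (f := fun n y => c n * e n y)
      (fun n => (he.1 n).const_mul (c n)) _ hp).trans ?_
    simp_rw [hce, hC]
    gcongr _ * ?_ ^ _
    exact ENNReal.sum_le_tsum _
  have hC_lt_top : C < ⊤ :=
    ENNReal.mul_lt_top (ENNReal.mul_lt_top
      (ENNReal.rpow_lt_top_of_nonneg (by linarith) ENNReal.ofNat_ne_top)
      (lintegral_enorm_rpow_gaussianReal_lt_top (by linarith)))
      (ENNReal.rpow_lt_top_of_nonneg (by linarith) hsum.ne)
  exact ae_eLpNorm_lt_top_of_lintegral_uncurry_lt_top hF.1.aestronglyMeasurable (by linarith)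
    ((lintegral_enorm_rpow_le_of_tendsto_eLpNorm (fun N => (hS N).aestronglyMeasurable)
      hF.1.aestronglyMeasurable two_ne_zero hF.2 hbound).trans_lt hC_lt_top)

/-- if `∑ n, |c n|² ‖e n‖_{L^p}² < ∞` then the random series
`F_c = ∑ n, g n * c n * e n` has finite `L^p(Y, μ)` norm almost surely. -/
theorem lp_norm_finite_of_summable {Ω Y : Type*} [MeasurableSpace Ω] [MeasurableSpace Y]
    (P : Measure Ω) (μ : Measure Y) [IsProbabilityMeasure P] [IsFiniteMeasure μ]
    (e : ℕ → Y → ℂ) (c : ℕ → ℂ) (g : ℕ → Ω → ℂ) (F : Ω → Y → ℂ)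
    (he : IsOrthonormalSystem μ e) (hec : IsCompleteSystem μ e)
    (hc : Summable fun n => ‖c n‖ ^ 2)
    (hg : IsStdGaussianSeq P g) (hF : IsL2LimitOfSeries P μ g c e F)
    (p : ℝ) (hp : 2 ≤ p)
    (hsum : ∑' n, ENNReal.ofReal (‖c n‖ ^ 2) *
        eLpNorm (e n) (ENNReal.ofReal p) μ ^ 2 < ⊤) :
    ∀ᵐ ω ∂P, eLpNorm (F ω) (ENNReal.ofReal p) μ < ⊤ :=
  lp_norm_finite_of_summable_general P μ e c g F he hg hF p hp hsum
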